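/- (Evolution of the energy density.) Suppose on [t₀,T]: g^{ab}(t) is a differentiable symmetric positive definite matrix-valued function and k^{ab}(t) a continuous symmetric matrix-valued function with dg^{ab}/dt = −2k^{ab}. Let F : [t₀,T]×ℝ³ → [0,∞) be measurable, differentiable in t, such that differentiation under the integral sign is justified (e.g. ⟨p⟩·F and ⟨p⟩·|∂_t F| are dominated, locally uniformly in t, by integrable functions of p), and such that ∫_{ℝ³} ∂_tF(t,p) · p⁰(t,p) dp = 0 for all t. Define ρ(t) = (det g(t))^{−1/2} ∫_{ℝ³} F(t,p) p⁰(t,p) dp and S_{ab}(t) = (det g(t))^{−1/2} ∫_{ℝ³} F(t,p) (p_a p_b / p⁰(t,p)) dp. Then ρ is differentiable and dρ/dt = −kρ − k^{ab}S_{ab}, where k = g_{ab}k^{ab}. -/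

import Mathlib

open Matrix Real Set MeasureTheory

noncomputable section

/-- 3×3 real matrices. -/
abbrev Mat3 := Matrix (Fin 3) (Fin 3) ℝ
/-- Momentum vectors in ℝ³. -/
abbrev V3 := Fin 3 → ℝ

/-- The quadratic form `g^{ab} p_a p_b = pᵀ G p`. -/
def quadG (G : Mat3) (p : V3) : ℝ := p ⬝ᵥ G *ᵥ p

/-- The particle energy `p⁰ = √(1 + g^{ab} p_a p_b)`. -/
def p0 (G : Mat3) (p : V3) : ℝ := Real.sqrt (1 + quadG G p)

/-- The Japanese bracket `⟨p⟩ = √(1+|p|²)`. -/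
def jap (p : V3) : ℝ := Real.sqrt (1 + ∑ i, p i ^ 2)

/-- The trace `k = g_{ab} k^{ab}`. -/
def trK (G K : Mat3) : ℝ := ∑ a, ∑ b, G⁻¹ a b * K a b

/-- The energy density `ρ = (det g)^{−1/2} ∫ F p⁰ dp`; note
`(det g)^{−1/2} = √(det G)` where `(g_{ab}) = G⁻¹`. -/
def rhoF (G : Mat3) (F : V3 → ℝ) : ℝ :=
  Real.sqrt G.det * ∫ p : V3, F p * p0 G p

/-- The stress with lower indices, `S_{ab} = (det g)^{−1/2} ∫ F p_a p_b / p⁰ dp`. -/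
def SlowF (G : Mat3) (F : V3 → ℝ) (a b : Fin 3) : ℝ :=
  Real.sqrt G.det * ∫ p : V3, F p * (p a * p b / p0 G p)

/-! Along the flow `g' = -2k`, Jacobi's formula gives `(√det G)' = -k √det G` for `G = (g^{ab})`,
and differentiating under the integral sign, `∂ₜ(F p⁰) = ∂ₜF p⁰ - F k^{ab} p_a p_b / p⁰`; the first
term integrates to zero by hypothesis and the second to `k^{ab} S_{ab}`. Differentiation under the
integral is licensed by the domination of `⟨p⟩ F` and `⟨p⟩ ∂ₜF`: since `g` ranges over a compact
set of positive definite matrices, `p⁰` is comparable to `⟨p⟩` uniformly in `t`. -/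

open Topology Filter

section AffineExtension

variable {E : Type*} [NormedAddCommGroup E] [NormedSpace ℝ E]

theorem hasDerivWithinAt_of_isClosed_of_eqOn {f φ : ℝ → E} {d : E} {P : Set ℝ} {x : ℝ}
    (hP : IsClosed P) (heq : EqOn f φ P) (hφ : x ∈ P → HasDerivWithinAt φ d P x) :
    HasDerivWithinAt f d P x := by
  by_cases hx : x ∈ P
  · exact (hφ hx).congr heq (heq hx)
  · exact HasFDerivWithinAt.of_notMem_closure (hP.closure_eq.symm ▸ hx)

/-- Continuing `f` beyond `[a, b]` along its tangent lines at the endpoints turns one-sided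
derivatives on `[a, b]` into two-sided ones, which is what differentiation under the integral
sign (`hasDerivAt_integral_of_dominated_loc_of_deriv_le`) needs. -/
def affineExtendIcc {a b : ℝ} (hab : a ≤ b) (f f' : ℝ → E) (s : ℝ) : E :=
  f (projIcc a b hab s) + (s - projIcc a b hab s) • f' (projIcc a b hab s)

variable {a b : ℝ} {f f' : ℝ → E}

theorem affineExtendIcc_of_mem (hab : a ≤ b) {s : ℝ} (hs : s ∈ Icc a b) :
    affineExtendIcc hab f f' s = f s := by
  simp [affineExtendIcc, projIcc_of_mem hab hs]

theorem hasDerivAt_affineExtendIcc (hab : a ≤ b)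
    (hf : ∀ τ ∈ Icc a b, HasDerivWithinAt f (f' τ) (Icc a b) τ) (s : ℝ) :
    HasDerivAt (affineExtendIcc hab f f') (f' (projIcc a b hab s)) s := by
  have htangent (c : ℝ) : HasDerivAt (fun σ => f c + (σ - c) • f' c) (f' c) s := by
    simpa using (((hasDerivAt_id s).sub_const c).smul_const (f' c)).const_add (f c)
  rw [← hasDerivWithinAt_univ, ← Iic_union_Ici (a := a), ← Icc_union_Ici_eq_Ici hab]
  refine .union ?_ (.union ?_ ?_)
  · refine hasDerivWithinAt_of_isClosed_of_eqOn (φ := fun σ => f a + (σ - a) • f' a)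
      isClosed_Iic (fun σ hσ => ?_) fun hs => ?_
    · simp [affineExtendIcc, projIcc_of_le_left hab hσ]
    · simpa [projIcc_of_le_left hab hs] using (htangent a).hasDerivWithinAt
  · refine hasDerivWithinAt_of_isClosed_of_eqOn isClosed_Icc
      (fun σ hσ => affineExtendIcc_of_mem hab hσ) fun hs => ?_
    simpa [projIcc_of_mem hab hs] using hf s hs
  · refine hasDerivWithinAt_of_isClosed_of_eqOn (φ := fun σ => f b + (σ - b) • f' b)
      isClosed_Ici (fun σ hσ => ?_) fun hs => ?_
    · simp [affineExtendIcc, projIcc_of_right_le hab hσ]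
    · simpa [projIcc_of_right_le hab hs] using (htangent b).hasDerivWithinAt

theorem hasDerivWithinAt_integral_Icc_of_dominated {α : Type*} [MeasurableSpace α]
    {μ : Measure α} {H H' : ℝ → α → E} {bound : α → ℝ} {t : ℝ} (hab : a ≤ b) (ht : t ∈ Icc a b)
    (hH_meas : ∀ s ∈ Icc a b, AEStronglyMeasurable (H s) μ)
    (hH'_meas : ∀ s ∈ Icc a b, AEStronglyMeasurable (H' s) μ)
    (hH_int : Integrable (H t) μ)
    (h_bound : ∀ s ∈ Icc a b, ∀ x, ‖H' s x‖ ≤ bound x) (bound_integrable : Integrable bound μ)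
    (h_diff : ∀ x, ∀ s ∈ Icc a b, HasDerivWithinAt (H · x) (H' s x) (Icc a b) s) :
    HasDerivWithinAt (fun s => ∫ x, H s x ∂μ) (∫ x, H' t x ∂μ) (Icc a b) t := by
  set proj := projIcc a b hab
  have hext : ∀ s ∈ Icc a b, (fun x => affineExtendIcc hab (H · x) (H' · x) s) = H s :=
    fun s hs => funext fun x => affineExtendIcc_of_mem hab hs
  obtain ⟨-, hderiv⟩ := hasDerivAt_integral_of_dominated_loc_of_deriv_le (μ := μ)
    (F := fun s x => affineExtendIcc hab (H · x) (H' · x) s) (F' := fun s x => H' (proj s) x)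
    (x₀ := t) univ_mem
    (Eventually.of_forall fun s =>
      (hH_meas _ (proj s).2).add ((hH'_meas _ (proj s).2).const_smul _))
    (hext t ht ▸ hH_int) (hH'_meas _ (proj t).2)
    (ae_of_all _ fun x s _ => h_bound _ (proj s).2 x) bound_integrable
    (ae_of_all _ fun x s _ => hasDerivAt_affineExtendIcc hab (h_diff x) s)
  rw [show (proj t : ℝ) = t from congrArg Subtype.val (projIcc_of_mem hab ht)] at hderiv
  exact hderiv.hasDerivWithinAt.congr (fun s hs => by rw [hext s hs]) (by rw [hext t ht])

end AffineExtension

namespace Matrix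

variable {n : Type*} [Fintype n]

theorem hasDerivWithinAt_det [DecidableEq n] {A : ℝ → Matrix n n ℝ} {A' : Matrix n n ℝ}
    {S : Set ℝ} {x : ℝ} (hA : ∀ i j, HasDerivWithinAt (fun s => A s i j) (A' i j) S x) :
    HasDerivWithinAt (fun s => (A s).det) (adjugate (A x) * A').trace S x := by
  simp_rw [det_apply']
  refine (HasDerivWithinAt.fun_sum fun σ _ =>
    (HasDerivWithinAt.fun_finsetProd fun i _ => hA (σ i) i).const_mul _).congr_deriv ?_
  have hcol (j : n) : (adjugate (A x) * A') j j = ((A x).updateCol j fun r => A' r j).det := by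
    rw [← cramer_apply, cramer_eq_adjugate_mulVec]; rfl
  simp_rw [trace, diag, hcol, det_apply', Finset.mul_sum]
  rw [Finset.sum_comm]
  refine Finset.sum_congr rfl fun j _ => Finset.sum_congr rfl fun σ _ => ?_
  rw [← Finset.mul_prod_erase Finset.univ
    (fun i => (A x).updateCol j (fun r => A' r j) (σ i) i) (Finset.mem_univ j)]
  rw [Finset.prod_congr rfl fun i hi => updateCol_ne (Finset.ne_of_mem_erase hi)]
  simp only [updateCol_self, smul_eq_mul]
  ring

theorem hasDerivWithinAt_dotProduct_mulVec {A : ℝ → Matrix n n ℝ} {A' : Matrix n n ℝ}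
    {S : Set ℝ} {x : ℝ} (hA : ∀ i j, HasDerivWithinAt (fun s => A s i j) (A' i j) S x)
    (p : n → ℝ) :
    HasDerivWithinAt (fun s => p ⬝ᵥ A s *ᵥ p) (p ⬝ᵥ A' *ᵥ p) S x := by
  simp only [dotProduct, mulVec]
  exact .fun_sum fun i _ => (HasDerivWithinAt.fun_sum fun j _ =>
    (hA i j).mul_const (p j)).const_mul (p i)

theorem smul_dotProduct_mulVec_smul (A : Matrix n n ℝ) (c : ℝ) (p : n → ℝ) :
    c • p ⬝ᵥ A *ᵥ (c • p) = c ^ 2 * (p ⬝ᵥ A *ᵥ p) := by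
  rw [mulVec_smul, smul_dotProduct, dotProduct_smul, smul_eq_mul, smul_eq_mul]; ring

theorem dotProduct_mulVec_eq_sq_norm_mul {A : Matrix n n ℝ} {p : n → ℝ} (hp : p ≠ 0) :
    p ⬝ᵥ A *ᵥ p = ‖p‖ ^ 2 * ((‖p‖⁻¹ • p) ⬝ᵥ A *ᵥ (‖p‖⁻¹ • p)) := by
  rw [smul_dotProduct_mulVec_smul, ← mul_assoc, ← mul_pow, mul_inv_cancel₀ (norm_ne_zero_iff.2 hp),
    one_pow, one_mul]

theorem continuous_dotProduct_mulVec :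
    Continuous fun x : Matrix n n ℝ × (n → ℝ) => x.2 ⬝ᵥ x.1 *ᵥ x.2 :=
  continuous_snd.dotProduct (continuous_fst.matrix_mulVec continuous_snd)

theorem _root_.IsCompact.exists_pos_mul_sq_norm_le_dotProduct_mulVec
    {L : Set (Matrix n n ℝ)} (hL : IsCompact L) (hpd : ∀ A ∈ L, A.PosDef) :
    ∃ m > 0, ∀ A ∈ L, ∀ p, m * ‖p‖ ^ 2 ≤ p ⬝ᵥ A *ᵥ p := by
  obtain ⟨m, hm, hmin⟩ := (hL.prod (isCompact_sphere (0 : n → ℝ) 1)).exists_forall_le'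
    continuous_dotProduct_mulVec.continuousOn fun x hx =>
      (hpd _ hx.1).dotProduct_mulVec_pos (ne_zero_of_mem_unit_sphere ⟨x.2, hx.2⟩)
  refine ⟨m, hm, fun A hA p => ?_⟩
  rcases eq_or_ne p 0 with rfl | hp
  · simp
  rw [dotProduct_mulVec_eq_sq_norm_mul hp, mul_comm m]
  exact mul_le_mul_of_nonneg_left
    (hmin (A, _) ⟨hA, mem_sphere_zero_iff_norm.2 (norm_smul_inv_norm (𝕜 := ℝ) hp)⟩) (sq_nonneg _)

theorem _root_.IsCompact.exists_abs_dotProduct_mulVec_le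
    {L : Set (Matrix n n ℝ)} (hL : IsCompact L) :
    ∃ M, ∀ A ∈ L, ∀ p, |p ⬝ᵥ A *ᵥ p| ≤ M * ‖p‖ ^ 2 := by
  obtain ⟨M, hM⟩ := (hL.prod (isCompact_sphere (0 : n → ℝ) 1)).exists_bound_of_continuousOn
    continuous_dotProduct_mulVec.continuousOn
  refine ⟨M, fun A hA p => ?_⟩
  rcases eq_or_ne p 0 with rfl | hp
  · simp
  have hu := hM (A, _) ⟨hA, mem_sphere_zero_iff_norm.2 (norm_smul_inv_norm (𝕜 := ℝ) hp)⟩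
  rw [Real.norm_eq_abs] at hu
  rw [dotProduct_mulVec_eq_sq_norm_mul hp, abs_mul, abs_of_nonneg (sq_nonneg _), mul_comm M]
  exact mul_le_mul_of_nonneg_left hu (sq_nonneg _)

end Matrix

theorem sq_norm_le_sum_sq {ι : Type*} [Fintype ι] (p : ι → ℝ) : ‖p‖ ^ 2 ≤ ∑ i, p i ^ 2 := by
  have h := (pi_norm_le_iff_of_nonneg (Real.sqrt_nonneg (∑ i, p i ^ 2))).2 fun i => by
    rw [Real.norm_eq_abs, ← Real.sqrt_sq_eq_abs]
    exact Real.sqrt_le_sqrt (Finset.single_le_sum (fun j _ => sq_nonneg (p j)) (Finset.mem_univ i))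
  calc ‖p‖ ^ 2 ≤ Real.sqrt (∑ i, p i ^ 2) ^ 2 := pow_le_pow_left₀ (norm_nonneg p) h 2
    _ = ∑ i, p i ^ 2 := Real.sq_sqrt (Finset.sum_nonneg fun i _ => sq_nonneg (p i))

theorem sum_sq_le_card_mul_sq_norm {ι : Type*} [Fintype ι] (p : ι → ℝ) :
    ∑ i, p i ^ 2 ≤ Fintype.card ι * ‖p‖ ^ 2 := by
  calc ∑ i, p i ^ 2 ≤ ∑ _i : ι, ‖p‖ ^ 2 := Finset.sum_le_sum fun i _ => by
        rw [← sq_abs, ← Real.norm_eq_abs]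
        exact pow_le_pow_left₀ (norm_nonneg _) (norm_le_pi_norm p i) 2
    _ = Fintype.card ι * ‖p‖ ^ 2 := by simp

theorem jap_sq (p : V3) : jap p ^ 2 = 1 + ∑ i, p i ^ 2 :=
  Real.sq_sqrt (by positivity)

theorem jap_pos (p : V3) : 0 < jap p :=
  Real.sqrt_pos.2 (by positivity)

theorem sq_norm_le_jap_sq (p : V3) : ‖p‖ ^ 2 ≤ jap p ^ 2 := by
  rw [jap_sq]; linarith [sq_norm_le_sum_sq p]

theorem continuous_quadG (G : Mat3) : Continuous (quadG G) :=
  continuous_id.dotProduct (continuous_const.matrix_mulVec continuous_id)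

theorem quadG_smul (c : ℝ) (K : Mat3) (p : V3) : quadG (c • K) p = c * quadG K p := by
  simp [quadG, smul_mulVec]

theorem continuous_p0 (G : Mat3) : Continuous (p0 G) :=
  Real.continuous_sqrt.comp (continuous_const.add (continuous_quadG G))

theorem IsCompact.exists_pos_mul_jap_le_p0 {L : Set Mat3} (hL : IsCompact L)
    (hpd : ∀ G ∈ L, G.PosDef) : ∃ c > 0, ∀ G ∈ L, ∀ p, c * jap p ≤ p0 G p := by
  obtain ⟨m, hm, hmG⟩ := hL.exists_pos_mul_sq_norm_le_dotProduct_mulVec hpd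
  refine ⟨Real.sqrt (min 1 (m / 3)), Real.sqrt_pos.2 (by positivity), fun G hG p => ?_⟩
  rw [jap, p0, ← Real.sqrt_mul (by positivity)]
  refine Real.sqrt_le_sqrt ?_
  have hcard := sum_sq_le_card_mul_sq_norm p
  have hq : m * ‖p‖ ^ 2 ≤ quadG G p := hmG G hG p
  simp only [Fintype.card_fin, Nat.cast_ofNat] at hcard
  nlinarith [min_le_left 1 (m / 3), min_le_right 1 (m / 3), sq_nonneg ‖p‖,
    Finset.sum_nonneg fun i (_ : i ∈ Finset.univ) => sq_nonneg (p i)]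

theorem IsCompact.exists_abs_quadG_le_mul_sq_norm {L : Set Mat3} (hL : IsCompact L) :
    ∃ M ≥ 0, ∀ G ∈ L, ∀ p, |quadG G p| ≤ M * ‖p‖ ^ 2 := by
  obtain ⟨M, hM⟩ := hL.exists_abs_dotProduct_mulVec_le
  exact ⟨max M 0, le_max_right _ _, fun G hG p =>
    (hM G hG p).trans (mul_le_mul_of_nonneg_right (le_max_left _ _) (sq_nonneg _))⟩

theorem IsCompact.exists_p0_le_mul_jap {L : Set Mat3} (hL : IsCompact L) :
    ∃ C, ∀ G ∈ L, ∀ p, p0 G p ≤ C * jap p := by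
  obtain ⟨M, hM, hMG⟩ := hL.exists_abs_quadG_le_mul_sq_norm
  refine ⟨Real.sqrt (1 + M), fun G hG p => ?_⟩
  rw [jap, p0, ← Real.sqrt_mul (by positivity)]
  refine Real.sqrt_le_sqrt ?_
  have hq := (abs_le.1 (hMG G hG p)).2
  nlinarith [sq_norm_le_sum_sq p]

theorem IsCompact.exists_abs_quadG_le_mul_jap_sq {L : Set Mat3} (hL : IsCompact L) :
    ∃ M, ∀ K ∈ L, ∀ p, |quadG K p| ≤ M * jap p ^ 2 := by
  obtain ⟨M, hM, hMK⟩ := hL.exists_abs_quadG_le_mul_sq_norm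
  exact ⟨M, fun K hK p =>
    (hMK K hK p).trans (mul_le_mul_of_nonneg_left (sq_norm_le_jap_sq p) hM)⟩

theorem hasDerivWithinAt_p0 {G : ℝ → Mat3} {G' : Mat3} {S : Set ℝ} {t : ℝ}
    (hG : ∀ i j, HasDerivWithinAt (fun s => G s i j) (G' i j) S t) {p : V3}
    (hp : 0 < p0 (G t) p) :
    HasDerivWithinAt (fun s => p0 (G s) p) (quadG G' p / (2 * p0 (G t) p)) S t :=
  ((hasDerivWithinAt_dotProduct_mulVec hG p).const_add 1).sqrt (Real.sqrt_pos.1 hp).ne'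

theorem trK_eq_trace {G K : Mat3} (hK : K.IsSymm) : trK G K = (G⁻¹ * K).trace := by
  conv_rhs => rw [← hK.eq]
  simp [trK, trace, mul_apply]

theorem hasDerivWithinAt_sqrt_det {G : ℝ → Mat3} {K : Mat3} {S : Set ℝ} {t : ℝ}
    (hG : ∀ i j, HasDerivWithinAt (fun s => G s i j) (-2 * K i j) S t) (hpd : (G t).PosDef)
    (hK : K.IsSymm) :
    HasDerivWithinAt (fun s => Real.sqrt (G s).det) (-trK (G t) K * Real.sqrt (G t).det) S t := by
  have hdet := hpd.det_pos
  refine ((hasDerivWithinAt_det (A' := (-2 : ℝ) • K) (by simpa using hG)).sqrt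
    hdet.ne').congr_deriv ?_
  have htrace : (adjugate (G t) * K).trace = (G t).det * trK (G t) K := by
    rw [trK_eq_trace hK, inv_def, Ring.inverse_eq_inv', smul_mul_assoc, trace_smul, smul_eq_mul,
      mul_inv_cancel_left₀ hdet.ne']
  rw [mul_smul_comm, trace_smul, htrace, smul_eq_mul, div_eq_iff (by positivity)]
  linear_combination (2 * trK (G t) K) * Real.sq_sqrt hdet.le

theorem abs_mul_le_of_mul_abs_le {x y w K φ : ℝ} (hw : 0 < w) (hx : w * |x| ≤ φ)
    (hy : |y| ≤ K * w) : |x * y| ≤ K * φ := by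
  have hK : 0 ≤ K := nonneg_of_mul_nonneg_left ((abs_nonneg y).trans hy) hw
  rw [abs_mul]
  nlinarith [abs_nonneg x]

theorem integrable_mul_of_jap_bounds {A B φ : V3 → ℝ} {K : ℝ} (hφ : Integrable φ)
    (hA : AEStronglyMeasurable A) (hB : AEStronglyMeasurable B)
    (hAφ : ∀ p, jap p * |A p| ≤ φ p) (hBK : ∀ p, |B p| ≤ K * jap p) :
    Integrable fun p => A p * B p :=
  (hφ.const_mul K).mono' (hA.mul hB) <| ae_of_all _ fun p =>
    abs_mul_le_of_mul_abs_le (jap_pos p) (hAφ p) (hBK p)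

theorem abs_div_p0_le {G : Mat3} {p : V3} {x c M : ℝ} (hc : 0 < c)
    (hlow : c * jap p ≤ p0 G p) (hx : |x| ≤ M * jap p ^ 2) : |x / p0 G p| ≤ M / c * jap p := by
  have hjap := jap_pos p
  have hp0 : 0 < p0 G p := (mul_pos hc hjap).trans_le hlow
  rw [abs_div, abs_of_pos hp0, div_le_iff₀ hp0]
  calc |x| ≤ M * jap p ^ 2 := hx
    _ = M / c * jap p * (c * jap p) := by field_simp
    _ ≤ M / c * jap p * p0 G p := by
      have hM : 0 ≤ M := nonneg_of_mul_nonneg_left ((abs_nonneg x).trans hx) (by positivity)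
      gcongr

theorem abs_mul_le_jap_sq (p : V3) (a b : Fin 3) : |p a * p b| ≤ jap p ^ 2 := by
  rw [abs_mul, ← Real.norm_eq_abs, ← Real.norm_eq_abs]
  calc ‖p a‖ * ‖p b‖ ≤ ‖p‖ * ‖p‖ := mul_le_mul (norm_le_pi_norm p a) (norm_le_pi_norm p b)
        (norm_nonneg _) (norm_nonneg _)
    _ = ‖p‖ ^ 2 := (sq _).symm
    _ ≤ jap p ^ 2 := sq_norm_le_jap_sq p

theorem integral_mul_quadG_div_p0 {G K : Mat3} {F : V3 → ℝ}
    (hint : ∀ a b, Integrable fun p => F p * (p a * p b / p0 G p)) :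
    ∫ p, F p * (quadG K p / p0 G p) = ∑ a, ∑ b, K a b * ∫ p, F p * (p a * p b / p0 G p) := by
  have hexpand : (fun p => F p * (quadG K p / p0 G p))
      = fun p => ∑ a, ∑ b, K a b * (F p * (p a * p b / p0 G p)) := by
    funext p
    simp only [quadG, dotProduct, mulVec, Finset.mul_sum, Finset.sum_div]
    exact Finset.sum_congr rfl fun a _ => Finset.sum_congr rfl fun b _ => by ring
  rw [hexpand, integral_finsetSum]
  · refine Finset.sum_congr rfl fun a _ => ?_
    rw [integral_finsetSum]
    · exact Finset.sum_congr rfl fun b _ => integral_const_mul _ _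
    · exact fun b _ => (hint a b).const_mul _
  · exact fun a _ => integrable_finsetSum _ fun b _ => (hint a b).const_mul _

theorem hasDerivWithinAt_mul_p0 {g : ℝ → Mat3} {K : Mat3} {f : ℝ → ℝ} {f' : ℝ} {S : Set ℝ}
    {t : ℝ} {p : V3} (hf : HasDerivWithinAt f f' S t)
    (hg : ∀ i j, HasDerivWithinAt (fun s => g s i j) (-2 * K i j) S t) (hp : 0 < p0 (g t) p) :
    HasDerivWithinAt (fun s => f s * p0 (g s) p)
      (f' * p0 (g t) p - f t * (quadG K p / p0 (g t) p)) S t := by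
  refine (hf.mul (hasDerivWithinAt_p0 (G' := (-2 : ℝ) • K) (by simpa using hg) hp)).congr_deriv ?_
  rw [quadG_smul]
  field_simp
  ring

theorem hasDerivWithinAt_integral_mul_p0 {a b t : ℝ} (hab : a ≤ b) (ht : t ∈ Icc a b)
    {g k : ℝ → Mat3} {F F' : ℝ → V3 → ℝ} {φ : V3 → ℝ} {c C M : ℝ} (hc : 0 < c)
    (hlow : ∀ s ∈ Icc a b, ∀ p, c * jap p ≤ p0 (g s) p)
    (hup : ∀ s ∈ Icc a b, ∀ p, p0 (g s) p ≤ C * jap p)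
    (hk : ∀ s ∈ Icc a b, ∀ p, |quadG (k s) p| ≤ M * jap p ^ 2)
    (hg : ∀ i j, ∀ s ∈ Icc a b, HasDerivWithinAt (fun σ => g σ i j) (-2 * k s i j) (Icc a b) s)
    (hFmeas : ∀ s ∈ Icc a b, Measurable (F s)) (hF'meas : ∀ s ∈ Icc a b, Measurable (F' s))
    (hFt : ∀ p, ∀ s ∈ Icc a b, HasDerivWithinAt (fun σ => F σ p) (F' s p) (Icc a b) s)
    (hφ : Integrable φ)
    (hFφ : ∀ s ∈ Icc a b, ∀ p, jap p * |F s p| ≤ φ p ∧ jap p * |F' s p| ≤ φ p) :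
    HasDerivWithinAt (fun s => ∫ p, F s p * p0 (g s) p)
      ((∫ p, F' t p * p0 (g t) p) - ∑ i, ∑ j, k t i j * ∫ p, F t p * (p i * p j / p0 (g t) p))
      (Icc a b) t := by
  have hp0 : ∀ s ∈ Icc a b, ∀ p, |p0 (g s) p| ≤ C * jap p := fun s hs p =>
    (abs_of_nonneg (Real.sqrt_nonneg _)).trans_le (hup s hs p)
  have hratio : ∀ s ∈ Icc a b, ∀ p, |quadG (k s) p / p0 (g s) p| ≤ M / c * jap p :=
    fun s hs p => abs_div_p0_le hc (hlow s hs p) (hk s hs p)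
  have hmeas_p0 (s : ℝ) : AEStronglyMeasurable (p0 (g s)) := (continuous_p0 _).aestronglyMeasurable
  have hmeas_ratio (s : ℝ) : AEStronglyMeasurable fun p => quadG (k s) p / p0 (g s) p :=
    ((continuous_quadG _).measurable.div (continuous_p0 _).measurable).aestronglyMeasurable
  have hFt_meas := (hFmeas t ht).aestronglyMeasurable (μ := volume)
  have hint_stress (i j : Fin 3) : Integrable fun p => F t p * (p i * p j / p0 (g t) p) :=
    integrable_mul_of_jap_bounds hφ hFt_meas
      (((measurable_pi_apply i).mul (measurable_pi_apply j)).div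
        (continuous_p0 _).measurable).aestronglyMeasurable
      (fun p => (hFφ t ht p).1) fun p => abs_div_p0_le hc (hlow t ht p)
        ((abs_mul_le_jap_sq p i j).trans_eq (one_mul _).symm)
  rw [← integral_mul_quadG_div_p0 hint_stress, ← integral_sub
    (integrable_mul_of_jap_bounds hφ (hF'meas t ht).aestronglyMeasurable (hmeas_p0 t)
      (fun p => (hFφ t ht p).2) (hp0 t ht))
    (integrable_mul_of_jap_bounds hφ hFt_meas (hmeas_ratio t)
      (fun p => (hFφ t ht p).1) (hratio t ht))]
  refine hasDerivWithinAt_integral_Icc_of_dominated hab ht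
    (H' := fun s p => F' s p * p0 (g s) p - F s p * (quadG (k s) p / p0 (g s) p))
    (bound := fun p => (C + M / c) * φ p)
    (fun s hs => (hFmeas s hs).aestronglyMeasurable.mul (hmeas_p0 s))
    (fun s hs => ((hF'meas s hs).aestronglyMeasurable.mul (hmeas_p0 s)).sub
      ((hFmeas s hs).aestronglyMeasurable.mul (hmeas_ratio s)))
    (integrable_mul_of_jap_bounds hφ hFt_meas (hmeas_p0 t) (fun p => (hFφ t ht p).1) (hp0 t ht))
    (fun s hs p => ?_) (hφ.const_mul _) fun p s hs => ?_
  · rw [Real.norm_eq_abs, add_mul]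
    exact (abs_sub _ _).trans (add_le_add
      (abs_mul_le_of_mul_abs_le (jap_pos p) (hFφ s hs p).2 (hp0 s hs p))
      (abs_mul_le_of_mul_abs_le (jap_pos p) (hFφ s hs p).1 (hratio s hs p)))
  · exact hasDerivWithinAt_mul_p0 (hFt p s hs) (hg · · s hs)
      ((mul_pos hc (jap_pos p)).trans_le (hlow s hs p))

theorem stmt16_general (t₀ T : ℝ) (hT : t₀ ≤ T)
    (g k : ℝ → Mat3)
    (hgpd : ∀ t ∈ Icc t₀ T, (g t).PosDef)
    (hksym : ∀ t ∈ Icc t₀ T, (k t).IsSymm)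
    (hkcont : ∀ a b : Fin 3, ContinuousOn (fun t => k t a b) (Icc t₀ T))
    (hgode : ∀ a b : Fin 3, ∀ t ∈ Icc t₀ T,
      HasDerivWithinAt (fun s => g s a b) (-2 * k t a b) (Icc t₀ T) t)
    (F F' : ℝ → V3 → ℝ)
    (hFmeas : ∀ t ∈ Icc t₀ T, Measurable (F t))
    (hF'meas : ∀ t ∈ Icc t₀ T, Measurable (F' t))
    (hFt : ∀ p : V3, ∀ t ∈ Icc t₀ T,
      HasDerivWithinAt (fun s => F s p) (F' t p) (Icc t₀ T) t)
    (hdom : ∃ φ : V3 → ℝ, Integrable φ ∧ ∀ t ∈ Icc t₀ T, ∀ p : V3,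
      jap p * |F t p| ≤ φ p ∧ jap p * |F' t p| ≤ φ p)
    (hzero : ∀ t ∈ Icc t₀ T, ∫ p : V3, F' t p * p0 (g t) p = 0) :
    ∀ t ∈ Icc t₀ T,
      HasDerivWithinAt (fun s => rhoF (g s) (F s))
        (-(trK (g t) (k t)) * rhoF (g t) (F t)
          - ∑ a, ∑ b, k t a b * SlowF (g t) (F t) a b) (Icc t₀ T) t := by
  intro t ht
  obtain ⟨φ, hφ, hFφ⟩ := hdom
  have hg_cont : ContinuousOn g (Icc t₀ T) := continuousOn_pi.2 fun i =>
    continuousOn_pi.2 fun j s hs => (hgode i j s hs).continuousWithinAt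
  have hk_cont : ContinuousOn k (Icc t₀ T) :=
    continuousOn_pi.2 fun i => continuousOn_pi.2 (hkcont i)
  have hgL := isCompact_Icc.image_of_continuousOn hg_cont
  obtain ⟨c, hc, hlow⟩ := hgL.exists_pos_mul_jap_le_p0 (forall_mem_image.2 hgpd)
  obtain ⟨C, hup⟩ := hgL.exists_p0_le_mul_jap
  obtain ⟨M, hk⟩ := (isCompact_Icc.image_of_continuousOn hk_cont).exists_abs_quadG_le_mul_jap_sq
  have hI := hasDerivWithinAt_integral_mul_p0 hT ht hc (fun s hs => hlow _ (mem_image_of_mem g hs))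
    (fun s hs => hup _ (mem_image_of_mem g hs)) (fun s hs => hk _ (mem_image_of_mem k hs))
    hgode hFmeas hF'meas hFt hφ hFφ
  rw [hzero t ht, zero_sub] at hI
  refine ((hasDerivWithinAt_sqrt_det (fun i j => hgode i j t ht) (hgpd t ht)
    (hksym t ht)).mul hI).congr_deriv ?_
  simp only [rhoF, SlowF, mul_left_comm (k t _ _), ← Finset.mul_sum]
  ring

/-- evolution of the energy density.  If `dg^{ab}/dt = −2k^{ab}`, `F ≥ 0` is
differentiable in `t` with derivative `F'`, dominated together with `F'` (after
multiplication by `⟨p⟩`) by an integrable function, and `∫ F'(t,p) p⁰ dp = 0`, then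
`ρ(t) = √(det G(t)) ∫ F(t,p) p⁰(t,p) dp` is differentiable with
`dρ/dt = −kρ − k^{ab}S_{ab}`. -/
theorem stmt16 (t₀ T : ℝ) (hT : t₀ ≤ T)
    (g k : ℝ → Mat3)
    (hgpd : ∀ t ∈ Icc t₀ T, (g t).PosDef)
    (hksym : ∀ t ∈ Icc t₀ T, (k t).IsSymm)
    (hkcont : ∀ a b : Fin 3, ContinuousOn (fun t => k t a b) (Icc t₀ T))
    (hgode : ∀ a b : Fin 3, ∀ t ∈ Icc t₀ T,
      HasDerivWithinAt (fun s => g s a b) (-2 * k t a b) (Icc t₀ T) t)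
    (F F' : ℝ → V3 → ℝ)
    (hFpos : ∀ t ∈ Icc t₀ T, ∀ p, 0 ≤ F t p)
    (hFmeas : ∀ t ∈ Icc t₀ T, Measurable (F t))
    (hF'meas : ∀ t ∈ Icc t₀ T, Measurable (F' t))
    (hFt : ∀ p : V3, ∀ t ∈ Icc t₀ T,
      HasDerivWithinAt (fun s => F s p) (F' t p) (Icc t₀ T) t)
    (hdom : ∃ φ : V3 → ℝ, Integrable φ ∧ ∀ t ∈ Icc t₀ T, ∀ p : V3,
      jap p * |F t p| ≤ φ p ∧ jap p * |F' t p| ≤ φ p)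
    (hzero : ∀ t ∈ Icc t₀ T, ∫ p : V3, F' t p * p0 (g t) p = 0) :
    ∀ t ∈ Icc t₀ T,
      HasDerivWithinAt (fun s => rhoF (g s) (F s))
        (-(trK (g t) (k t)) * rhoF (g t) (F t)
          - ∑ a, ∑ b, k t a b * SlowF (g t) (F t) a b) (Icc t₀ T) t :=
  stmt16_general t₀ T hT g k hgpd hksym hkcont hgode F F' hFmeas hF'meas hFt hdom hzero
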